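/- Concurrent execution on disjointly split stores can reach stuck states: for the program with rules r1 @ A,B ⇔ C and r2 @ D,E ⇔ F, the state with goals {A#3, D#4} and store {A#3, B#1, D#4, E#2}, if each goal executes Drop against only its half of a split store ({A#3,E#2} and {B#1,D#4} respectively), reaches the goal-free state ⟨∅, {A#3,B#1,D#4,E#2}⟩ whose store still contains rule head instances of both r1 and r2 (hence its abstraction {A,B,D,E} is not a final abstract store under ⤳_A). -/

import Mathlib

/-!
Drop consults only the part of the store its thread can see. In the half seen by `A#3` there is
no `B`, and in the half seen by `D#4` there is no `E`, so both goals are dropped, although the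
full store still contains the heads of both rules.
-/

/-- Constraints of the program `r1 @ A,B ⇔ C` and `r2 @ D,E ⇔ F`. -/
inductive K where
  | A | B | C | D | E | F
deriving DecidableEq

/-- Abstract CHR semantics of the program: r1 rewrites {A,B} to {C},
r2 rewrites {D,E} to {F}. -/
inductive KStep : Multiset K → Multiset K → Prop
  | r1 (S : Multiset K) : KStep ({K.A, K.B} + S) (K.C ::ₘ S)
  | r2 (S : Multiset K) : KStep ({K.D, K.E} + S) (K.F ::ₘ S)

/-- `c` has a matching rule partner in the visible store `V`. -/
def hasPartner (c : K) (V : Multiset (K × ℕ)) : Prop :=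
  (c = K.A ∧ ∃ j, (K.B, j) ∈ V) ∨ (c = K.B ∧ ∃ j, (K.A, j) ∈ V) ∨
  (c = K.D ∧ ∃ j, (K.E, j) ∈ V) ∨ (c = K.E ∧ ∃ j, (K.D, j) ∈ V)

/-- Drop of an active goal by a thread that sees only the part `V` of the
store: the goal is dropped when no Simplify/Propagate applies with partners
found in the visible store. -/
inductive DropWrt (V : Multiset (K × ℕ)) :
    Multiset (K × ℕ) × Multiset (K × ℕ) →
    Multiset (K × ℕ) × Multiset (K × ℕ) → Prop
  | drop (c : K) (i : ℕ) (G Sn : Multiset (K × ℕ))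
      (h : ¬ hasPartner c V) :
      DropWrt V ((c, i) ::ₘ G, Sn) (G, Sn)

/-- Strip identifiers. -/
def dropIds (Sn : Multiset (K × ℕ)) : Multiset K := Sn.map Prod.fst

theorem reflTransGen_dropWrt_or_dropWrt_zero {V₁ V₂ : Multiset (K × ℕ)}
    (G Sn : Multiset (K × ℕ)) (hG : ∀ g ∈ G, ¬ hasPartner g.1 V₁ ∨ ¬ hasPartner g.1 V₂) :
    Relation.ReflTransGen (fun σ σ' => DropWrt V₁ σ σ' ∨ DropWrt V₂ σ σ') (G, Sn) (0, Sn) := by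
  induction G using Multiset.induction_on with
  | empty => exact .refl
  | cons g G ih =>
    rw [Multiset.forall_mem_cons] at hG
    refine .head ?_ (ih hG.2)
    exact hG.1.imp (DropWrt.drop g.1 g.2 G Sn) (DropWrt.drop g.1 g.2 G Sn)

theorem KStep.r1_cons (S : Multiset K) : KStep (K.A ::ₘ K.B ::ₘ S) (K.C ::ₘ S) := by
  simpa only [Multiset.insert_eq_cons, Multiset.cons_add, Multiset.singleton_add] using KStep.r1 S

theorem KStep.r2_cons (S : Multiset K) : KStep (K.D ::ₘ K.E ::ₘ S) (K.F ::ₘ S) := by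
  simpa only [Multiset.insert_eq_cons, Multiset.cons_add, Multiset.singleton_add] using KStep.r2 S

/-- Concurrent execution on disjointly split stores reaches a stuck state:
with goals {A#3, D#4} and store {A#3,B#1,D#4,E#2}, each goal dropping
against only its half of the split store reaches the goal-free state with
the same store, whose abstraction {A,B,D,E} still admits abstract Rewrite
steps by both r1 and r2, hence is not a final store. -/
theorem split_store_stuck :
    Relation.ReflTransGen
      (fun σ σ' => DropWrt {(K.A, 3), (K.E, 2)} σ σ' ∨
                   DropWrt {(K.B, 1), (K.D, 4)} σ σ')
      ({(K.A, 3), (K.D, 4)}, {(K.A, 3), (K.B, 1), (K.D, 4), (K.E, 2)})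
      (0, {(K.A, 3), (K.B, 1), (K.D, 4), (K.E, 2)}) ∧
    dropIds {(K.A, 3), (K.B, 1), (K.D, 4), (K.E, 2)} =
      {K.A, K.B, K.D, K.E} ∧
    KStep {K.A, K.B, K.D, K.E} {K.C, K.D, K.E} ∧
    KStep {K.A, K.B, K.D, K.E} {K.F, K.A, K.B} := by
  refine ⟨reflTransGen_dropWrt_or_dropWrt_zero _ _ ?_, rfl, KStep.r1_cons _, ?_⟩
  · simp [hasPartner]
  · have hperm : ({K.A, K.B, K.D, K.E} : Multiset K) = {K.D, K.E, K.A, K.B} := by decide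
    rw [hperm]
    exact KStep.r2_cons _
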